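/- Let H be a normed real vector space, and let G be a topological group acting continuously on H by continuous linear isometries (or, more generally, by continuous linear maps, with the action map G × H → H continuous). Let D be a dense subgroup of G, let ω ∈ H, and suppose that the linear span V of the orbit {g • ω : g ∈ D} is finite-dimensional. Let Γ be a subgroup of G whose normal closure in G is all of G, and suppose every element of Γ fixes every vector of V. Then g • ω = ω for every g ∈ G; in particular, ω is a G-invariant vector. -/

import Mathlib

/-- Finite-dimensional case of the key step of Theorem 1: if a topological
group `G` acts continuously and `ℝ`-linearly on a normed real vector space
`H`, `D ≤ G` is dense, the span `V` of the `D`-orbit of `ω` is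
finite-dimensional, and a normally generating subgroup `Γ ≤ G` fixes `V`
pointwise, then `ω` is a `G`-invariant vector. -/
theorem invariant_vector_of_normally_generating_fixing
    {G H : Type*} [TopologicalSpace G] [Group G] [IsTopologicalGroup G]
    [NormedAddCommGroup H] [NormedSpace ℝ H]
    [DistribMulAction G H] [SMulCommClass G ℝ H] [ContinuousSMul G H]
    (D : Subgroup G) (hD : Dense (D : Set G))
    (ω : H)
    (hfd : FiniteDimensional ℝ (Submodule.span ℝ ((fun g : G => g • ω) '' (D : Set G))))
    (Γ : Subgroup G) (hΓ : Subgroup.normalClosure (Γ : Set G) = ⊤)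
    (hfix : ∀ γ ∈ Γ, ∀ v ∈ Submodule.span ℝ ((fun g : G => g • ω) '' (D : Set G)),
      γ • v = v) :
    ∀ g : G, g • ω = ω := by
  set V := Submodule.span ℝ ((fun g : G => g • ω) '' (D : Set G)) with hVdef
  have hωV : ω ∈ V := Submodule.subset_span ⟨1, D.one_mem, one_smul G ω⟩
  have hclosed : IsClosed (V : Set H) := Submodule.closed_of_finiteDimensional V
  -- V is invariant under D
  have hDinv : ∀ d ∈ D, ∀ v ∈ V, d • v ∈ V := by
    intro d hd v hv
    refine Submodule.span_induction ?_ ?_ ?_ ?_ hv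
    · rintro x ⟨g, hg, rfl⟩
      exact Submodule.subset_span ⟨d * g, D.mul_mem hd hg, by simp [mul_smul]⟩
    · simp only [smul_zero]; exact V.zero_mem
    · intro x y _ _ hx' hy'
      simpa [smul_add] using V.add_mem hx' hy'
    · intro c x _ hx'
      simpa [smul_comm] using V.smul_mem c hx'
  -- By density and closedness, V is invariant under G
  have hGinv : ∀ (g : G), ∀ v ∈ V, g • v ∈ V := by
    intro g v hv
    have hcont : Continuous fun x : G => x • v := continuous_id.smul continuous_const
    have hcl : IsClosed {x : G | x • v ∈ V} := hclosed.preimage hcont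
    have hsub : (D : Set G) ⊆ {x : G | x • v ∈ V} := fun d hd => hDinv d hd v hv
    exact hcl.closure_subset_iff.mpr hsub (hD g)
  -- The pointwise stabilizer of V is a normal subgroup
  let N : Subgroup G :=
    { carrier := {g : G | ∀ v ∈ V, g • v = v}
      one_mem' := fun v _ => one_smul G v
      mul_mem' := fun {a b} ha hb v hv => by
        rw [mul_smul, hb v hv, ha v hv]
      inv_mem' := fun {a} ha v hv => by
        have := ha v hv
        calc a⁻¹ • v = a⁻¹ • (a • v) := by rw [this]
          _ = v := inv_smul_smul a v }
  haveI hN : N.Normal := by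
    constructor
    intro n hn g v hv
    have h1 : g⁻¹ • v ∈ V := hGinv g⁻¹ v hv
    show (g * n * g⁻¹) • v = v
    rw [mul_smul, mul_smul, hn _ h1, smul_inv_smul]
  have hle : Subgroup.normalClosure (Γ : Set G) ≤ N :=
    Subgroup.normalClosure_le_normal (fun x hx => hfix x hx)
  intro g
  have hg : g ∈ N := hle (hΓ ▸ Subgroup.mem_top g)
  exact hg ω hωV
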